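/- arXiv:2502.19225 — 2 statements merged into one kernel-verified Lean document; each statement's English description precedes it below -/
import Mathlib

section
/- Let Λ be a finite group whose order divides 272 = 2⁴·17, let ψ ∈ Λ be an element of order 17, and suppose Λ contains a subgroup of order 34 that centralizes ψ. Then for every g ∈ Λ and every integer k with g·ψ·g⁻¹ = ψ^k, the residue of k modulo 17 is a quadratic residue, i.e., k ≡ ±1, ±2, ±4, or ±8 (mod 17). -/
theorem zmod17_pow8 : ∀ x : ZMod 17, x ^ 8 = 1 →
    (x = 1 ∨ x = -1 ∨ x = 2 ∨ x = -2 ∨ x = 4 ∨ x = -4 ∨ x = 8 ∨ x = -8) := by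
  decide

/-- Let `Λ` be a finite group whose order divides `272 = 2⁴·17`, let `ψ ∈ Λ` have order 17,
and suppose `Λ` has a subgroup of order 34 centralizing `ψ`.  Then whenever `g⬝ψ⬝g⁻¹ = ψᵏ`,
the residue of `k` mod 17 is a quadratic residue, i.e. `k ≡ ±1, ±2, ±4, ±8 (mod 17)`. -/
theorem stmt_7 {Λ : Type*} [Group Λ] [Finite Λ]
    (hΛ : Nat.card Λ ∣ 272)
    (ψ : Λ) (hψ : orderOf ψ = 17)
    (H : Subgroup Λ) (hH : Nat.card H = 34) (hcent : ∀ h ∈ H, h * ψ = ψ * h)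
    (g : Λ) (k : ℤ) (hg : g * ψ * g⁻¹ = ψ ^ k) :
    (k : ZMod 17) = 1 ∨ (k : ZMod 17) = -1 ∨
    (k : ZMod 17) = 2 ∨ (k : ZMod 17) = -2 ∨
    (k : ZMod 17) = 4 ∨ (k : ZMod 17) = -4 ∨
    (k : ZMod 17) = 8 ∨ (k : ZMod 17) = -8 := by
  haveI : Fact (Nat.Prime 17) := ⟨by norm_num⟩
  have hzpow : ∀ i : ℤ, ψ ^ i = 1 ↔ (17 : ℤ) ∣ i := by
    intro i
    rw [← orderOf_dvd_iff_zpow_eq_one, hψ]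
    norm_cast
  have hdvd17 : ∀ i : ℤ, ((i : ZMod 17) = 0) ↔ (17 : ℤ) ∣ i := by
    intro i
    rw [ZMod.intCast_zmod_eq_zero_iff_dvd]
    norm_cast
  -- conjugation of powers
  have hconj : ∀ j : ℤ, g * ψ ^ j * g⁻¹ = ψ ^ (k * j) := by
    intro j
    rw [← conj_zpow, hg, ← zpow_mul]
  -- commuting with an element passes to its integer powers
  have hcz : ∀ (a x : Λ) (j : ℤ), a * x = x * a → a ^ j * x = x * a ^ j := by
    intro a x j h
    exact Commute.zpow_left h j
  -- κ := k mod 17 is nonzero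
  have hψne : ψ ≠ 1 := by
    intro h; rw [h, orderOf_one] at hψ; omega
  have hκ0 : (k : ZMod 17) ≠ 0 := by
    intro h0
    have h17 : (17 : ℤ) ∣ k := (hdvd17 k).1 h0
    have h1 : ψ ^ k = 1 := (hzpow k).2 h17
    rw [h1] at hg
    apply hψne
    have h2 : g * ψ * g⁻¹ = 1 := hg
    calc ψ = g⁻¹ * (g * ψ * g⁻¹) * g := by group
    _ = 1 := by rw [h2]; group
  -- m : ℤ with k * m ≡ 1 (mod 17)
  obtain ⟨m, hm⟩ : ∃ m : ℤ, (17 : ℤ) ∣ k * m - 1 := by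
    refine ⟨((((k : ZMod 17))⁻¹).val : ℤ), ?_⟩
    rw [← hdvd17]
    push_cast
    rw [ZMod.natCast_val, ZMod.cast_id, sub_eq_zero]
    exact mul_inv_cancel₀ hκ0
  have hψkm : ψ ^ (k * m) = ψ := by
    have h1 : ψ ^ (k * m - 1) = 1 := (hzpow _).2 hm
    calc ψ ^ (k * m) = ψ ^ (k * m - 1) * ψ ^ (1 : ℤ) := by
          rw [← zpow_add]; congr 1; ring
    _ = ψ := by rw [h1, one_mul, zpow_one]
  have hginv : g⁻¹ * ψ * g = ψ ^ m := by
    have h1 : g * ψ ^ m * g⁻¹ = ψ := by rw [hconj m, hψkm]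
    calc g⁻¹ * ψ * g = g⁻¹ * (g * ψ ^ m * g⁻¹) * g := by rw [h1]
    _ = ψ ^ m := by group
  -- the centralizer C of ψ
  set C : Subgroup Λ := Subgroup.centralizer {ψ} with hCdef
  have hmemC : ∀ x : Λ, x ∈ C ↔ ψ * x = x * ψ := by
    intro x
    rw [hCdef, Subgroup.mem_centralizer_iff]
    constructor
    · intro h; exact h ψ rfl
    · intro h y hy; rw [Set.mem_singleton_iff] at hy; rw [hy]; exact h
  have hHC : H ≤ C := by
    intro h hh
    rw [hmemC]
    exact (hcent h hh).symm
  have h34 : (34 : ℕ) ∣ Nat.card C := hH ▸ Subgroup.card_dvd_of_le hHC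
  -- g normalizes C
  have hgN : g ∈ Subgroup.normalizer (C : Set Λ) := by
    rw [Subgroup.mem_normalizer_iff]
    intro h
    rw [hmemC, hmemC]
    constructor
    · intro hc
      have h1 : ψ ^ k * (g * h * g⁻¹) = (g * h * g⁻¹) * ψ ^ k := by
        rw [← hg]
        calc g * ψ * g⁻¹ * (g * h * g⁻¹) = g * (ψ * h) * g⁻¹ := by group
        _ = g * (h * ψ) * g⁻¹ := by rw [hc]
        _ = g * h * g⁻¹ * (g * ψ * g⁻¹) := by group
      have h2 : (ψ ^ k) ^ m * (g * h * g⁻¹) = (g * h * g⁻¹) * (ψ ^ k) ^ m :=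
        hcz _ _ m h1
      rwa [← zpow_mul, hψkm] at h2
    · intro hc
      have h1 : ψ ^ m * h = h * ψ ^ m := by
        calc ψ ^ m * h = (g⁻¹ * ψ * g) * h := by rw [hginv]
        _ = g⁻¹ * (ψ * (g * h * g⁻¹)) * g := by group
        _ = g⁻¹ * ((g * h * g⁻¹) * ψ) * g := by rw [hc]
        _ = h * (g⁻¹ * ψ * g) := by group
        _ = h * ψ ^ m := by rw [hginv]
      have h3 : (ψ ^ m) ^ k * h = h * (ψ ^ m) ^ k := hcz _ _ k h1
      rwa [← zpow_mul, mul_comm m k, hψkm] at h3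
  -- pass to the quotient of the normalizer
  set N : Subgroup Λ := Subgroup.normalizer (C : Set Λ) with hNdef
  have hle : C ≤ N := Subgroup.le_normalizer
  set C' : Subgroup N := C.subgroupOf N with hC'def
  have hcardC' : Nat.card C' = Nat.card C :=
    Nat.card_congr (Subgroup.subgroupOfEquivOfLe hle).toEquiv
  have hlag : Nat.card N = Nat.card (N ⧸ C') * Nat.card C' :=
    Subgroup.card_eq_card_quotient_mul_card_subgroup C'
  have hNdvd : Nat.card N ∣ 272 := dvd_trans (Subgroup.card_subgroup_dvd_card N) hΛ
  have hQ8 : Nat.card (N ⧸ C') ∣ 8 := by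
    obtain ⟨t, ht⟩ := h34
    have h1 : Nat.card (N ⧸ C') * (34 * t) ∣ 272 := by
      rw [← ht, ← hcardC', ← hlag]; exact hNdvd
    have h2 : Nat.card (N ⧸ C') * t ∣ 8 := by
      have h3 : 34 * (Nat.card (N ⧸ C') * t) ∣ 34 * 8 := by
        calc 34 * (Nat.card (N ⧸ C') * t) = Nat.card (N ⧸ C') * (34 * t) := by ring
        _ ∣ 272 := h1
        _ = 34 * 8 := by norm_num
      exact (mul_dvd_mul_iff_left (by norm_num : (34:ℕ) ≠ 0)).1 h3
    exact dvd_trans (Dvd.intro t rfl) h2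
  -- g^8 ∈ C
  have hg8 : g ^ 8 ∈ C := by
    set gN : N := ⟨g, hgN⟩ with hgNdef
    have hq : ((gN : N ⧸ C') : N ⧸ C') ^ 8 = 1 := by
      have hdvd : orderOf ((gN : N) : N ⧸ C') ∣ 8 :=
        dvd_trans (orderOf_dvd_natCard _) hQ8
      exact orderOf_dvd_iff_pow_eq_one.1 hdvd
    have h1 : ((gN ^ 8 : N) : N ⧸ C') = 1 := by
      rw [QuotientGroup.mk_pow]; exact hq
    have hmem : gN ^ 8 ∈ C' := (QuotientGroup.eq_one_iff _).1 h1
    rw [hC'def, Subgroup.mem_subgroupOf] at hmem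
    simpa using hmem
  -- iterate conjugation: g^n ψ g^{-n} = ψ^{k^n}
  have hiter : ∀ n : ℕ, (g ^ n) * ψ * (g ^ n)⁻¹ = ψ ^ (k ^ n) := by
    intro n
    induction n with
    | zero => simp
    | succ n ih =>
      calc (g ^ (n+1)) * ψ * (g ^ (n+1))⁻¹
          = g * ((g ^ n) * ψ * (g ^ n)⁻¹) * g⁻¹ := by group
      _ = g * ψ ^ (k ^ n) * g⁻¹ := by rw [ih]
      _ = ψ ^ (k * k ^ n) := hconj _
      _ = ψ ^ (k ^ (n+1)) := by rw [← pow_succ']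
  -- conclude k^8 ≡ 1 mod 17
  have hcomm8 : ψ * g ^ 8 = g ^ 8 * ψ := (hmemC _).1 hg8
  have hψk8 : ψ ^ ((k : ℤ) ^ 8) = ψ := by
    rw [← hiter 8]
    calc g ^ 8 * ψ * (g ^ 8)⁻¹ = ψ * g ^ 8 * (g ^ 8)⁻¹ := by rw [← hcomm8]
    _ = ψ := by group
  have h171 : (17 : ℤ) ∣ k ^ 8 - 1 := by
    rw [← hzpow, zpow_sub, hψk8, zpow_one, mul_inv_cancel]
  have hκ8 : ((k : ZMod 17)) ^ 8 = 1 := by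
    have h1 : ((k ^ 8 - 1 : ℤ) : ZMod 17) = 0 := (hdvd17 _).2 h171
    push_cast at h1
    linear_combination h1
  exact zmod17_pow8 _ hκ8
end

section
/- Any 5 distinct columns of the matrix A are linearly independent as vectors of F₂⁹; i.e., for every injective map f : {0,…,4} → {0,…,16}, the family of columns (A(·,f(0)), …, A(·,f(4))) is linearly independent over F₂. -/
/-- The generating vector of the quadratic residue code `C(A)`. -/
def avec : Fin 17 → ZMod 2 := ![1,1,1,0,1,0,1,1,1,0,0,0,0,0,0,0,0]
/-- The 9×17 circulant matrix with entries `A i j = avec ((j - i) mod 17)`. -/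
def A : Matrix (Fin 9) (Fin 17) (ZMod 2) := fun i j => avec (j - Fin.castLE (by norm_num) i)
def col (j : Fin 17) : Fin 9 → ZMod 2 := fun i => A i j
def good : List (Fin 17) → Nat → (Fin 9 → ZMod 2) → Bool
  | [], _, _ => true
  | _ :: _, 0, _ => true
  | c :: rest, Nat.succ k, x =>
      (decide (x + col c ≠ 0) && good rest k (x + col c)) && good rest (k+1) x

lemma goodSpec : ∀ (l : List (Fin 17)) (k : Nat) (x : Fin 9 → ZMod 2),
    good l k x = true → ∀ s : Finset (Fin 17), (∀ j ∈ s, j ∈ l) → s.card ≤ k →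
    s.Nonempty → x + ∑ j ∈ s, col j ≠ 0
  | [], k, x, _, s, hsub, _, hne => by
      obtain ⟨j, hj⟩ := hne
      exact absurd (hsub j hj) (by simp)
  | c :: rest, 0, x, _, s, hsub, hcard, hne => by
      obtain ⟨j, hj⟩ := hne
      have := Finset.card_pos.mpr ⟨j, hj⟩; omega
  | c :: rest, Nat.succ k, x, hg, s, hsub, hcard, hne => by
      simp only [good, Bool.and_eq_true, decide_eq_true_eq] at hg
      obtain ⟨⟨h1, h2⟩, h3⟩ := hg
      by_cases hc : c ∈ s
      · rcases Finset.eq_empty_or_nonempty (s.erase c) with he | hne'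
        · have : s = {c} := by
            apply Finset.eq_singleton_iff_unique_mem.mpr
            refine ⟨hc, fun y hy => ?_⟩
            by_contra hy'
            exact absurd (Finset.mem_erase.mpr ⟨hy', hy⟩) (by simp [he])
          rw [this, Finset.sum_singleton]
          exact h1
        · have hsum : ∑ j ∈ s, col j = col c + ∑ j ∈ s.erase c, col j :=
            (Finset.add_sum_erase s col hc).symm
          rw [hsum, ← add_assoc]
          refine goodSpec rest k (x + col c) h2 (s.erase c) ?_ ?_ hne'
          · intro j hj
            have hj' := Finset.mem_erase.mp hj
            rcases List.mem_cons.mp (hsub j hj'.2) with h | h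
            · exact absurd h hj'.1
            · exact h
          · have := Finset.card_erase_of_mem hc
            omega
      · refine goodSpec rest (k+1) x h3 s ?_ hcard hne
        intro j hj
        rcases List.mem_cons.mp (hsub j hj) with h | h
        · exact absurd (h ▸ hj) hc
        · exact h

set_option maxHeartbeats 2000000 in
lemma goodTrue : good (List.finRange 17) 5 0 = true := by decide

lemma keyLemma (s : Finset (Fin 17)) (hcard : s.card ≤ 5) (hne : s.Nonempty) :
    ∑ j ∈ s, col j ≠ 0 := by
  have := goodSpec (List.finRange 17) 5 0 goodTrue s
    (fun j _ => List.mem_finRange j) hcard hne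
  simpa using this

/-- Any 5 distinct columns of `A` are linearly independent over `F₂`. -/
theorem stmt_11 (f : Fin 5 → Fin 17) (hf : Function.Injective f) :
    LinearIndependent (ZMod 2) (fun k : Fin 5 => A.transpose (f k)) := by
  rw [Fintype.linearIndependent_iff]
  intro g hg
  by_contra hne
  push_neg at hne
  obtain ⟨k0, hk0⟩ := hne
  set t : Finset (Fin 5) := Finset.univ.filter (fun k => g k ≠ 0) with ht
  have htne : t.Nonempty := ⟨k0, by simp [ht, hk0]⟩
  set s : Finset (Fin 17) := t.image f with hs
  have hsne : s.Nonempty := htne.image f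
  have hscard : s.card ≤ 5 := le_trans (Finset.card_image_le)
    (le_trans (Finset.card_le_univ t) (by simp))
  apply keyLemma s hscard hsne
  rw [hs, Finset.sum_image (fun a _ b _ h => hf h)]
  have hcol : ∀ k ∈ t, col (f k) = g k • A.transpose (f k) := by
    intro k hk
    have h2 := (Finset.mem_filter.mp hk).2
    have hg1 : g k = 1 := by
      have hall : ∀ a : ZMod 2, a ≠ 0 → a = 1 := by decide
      exact hall _ h2
    funext i
    simp [col, hg1, Matrix.transpose_apply]
  rw [Finset.sum_congr rfl hcol, ht,
    Finset.sum_filter_of_ne (fun k _ h0 hk => absurd (by simp [hk]) h0)]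
  exact hg
end
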